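/- arXiv:1904.09060 — 7 statements merged into one kernel-verified Lean document; each statement's English description precedes it below -/
import Mathlib

section
/- Assume in addition: there is a group homomorphism λ : G → ℤ with λ(m) ≥ 0 for all m ∈ M and, for m ∈ M, λ(m) = 0 iff m = 1; every atom of M (an element a ∈ M, a ≠ 1, that cannot be written as a product of two elements of M both different from 1) is simple; and the set of simple elements is finite. Let Y be the graph with vertex set G in which distinct x, y are adjacent iff there exists f ∈ G with x, y ∈ C_f. Then Y is a connected, locally finite Helly graph, and left multiplication by elements of G gives an action of G on Y by graph automorphisms that is free and transitive on vertices (hence geometric). -/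
variable {G : Type*} [Group G]

/-- The prefix relation: `x ≼ y` iff `x⁻¹ * y ∈ M`. -/
def PrefixRel (M : Submonoid G) (x y : G) : Prop := x⁻¹ * y ∈ M

/-- The suffix relation: `x ≼ₛ y` iff `y * x⁻¹ ∈ M`. -/
def SuffixRel (M : Submonoid G) (x y : G) : Prop := y * x⁻¹ ∈ M

/-- `x` is an upper bound of `s` with respect to the relation `le`. -/
def IsUBOf (le : G → G → Prop) (s : Set G) (x : G) : Prop := ∀ y ∈ s, le y x

/-- `x` is a least upper bound (join) of `s` with respect to the relation `le`. -/
def IsLUBOf (le : G → G → Prop) (s : Set G) (x : G) : Prop :=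
  IsUBOf le s x ∧ ∀ z, IsUBOf le s z → le x z

/-- `x` is a greatest lower bound (meet) of `s` with respect to the relation `le`. -/
def IsGLBOf (le : G → G → Prop) (s : Set G) (x : G) : Prop :=
  (∀ y ∈ s, le x y) ∧ ∀ z, (∀ y ∈ s, le z y) → le z x

/-- The relation `le` makes `G` into a lattice: every pair of elements has a join and
a meet. -/
def IsLatticeRel (le : G → G → Prop) : Prop :=
  ∀ a b : G, (∃ x, IsLUBOf le {a, b} x) ∧ ∃ y, IsGLBOf le {a, b} y


/-- The cell based at `f`: the prefix-order interval `{x : f ≼ x ≼ f·Δ}`. -/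
def GarsideCell (M : Submonoid G) (Δ : G) (f : G) : Set G :=
  {x : G | PrefixRel M f x ∧ PrefixRel M x (f * Δ)}

/-- An element is simple if it lies in `M` and is a prefix of `Δ`. -/
def IsSimple (M : Submonoid G) (Δ : G) (a : G) : Prop := a ∈ M ∧ PrefixRel M a Δ

/-- An atom of `M`: a non-identity element that cannot be written as a product of two
non-identity elements of `M`. -/
def IsAtom' (M : Submonoid G) (a : G) : Prop :=
  a ∈ M ∧ a ≠ 1 ∧ ∀ x ∈ M, ∀ y ∈ M, a = x * y → x = 1 ∨ y = 1

/-- The combinatorial ball of radius `r` about `v` in the graph `Y`. -/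
def graphBall {V : Type*} (Y : SimpleGraph V) (v : V) (r : ℕ) : Set V :=
  {u : V | Y.dist v u ≤ r}

/-- A graph is Helly if every family of pairwise intersecting combinatorial balls has a
common vertex. -/
def IsHellyGraph {V : Type*} (Y : SimpleGraph V) : Prop :=
  ∀ S : Set (V × ℕ),
    (∀ p ∈ S, ∀ q ∈ S, (graphBall Y p.1 p.2 ∩ graphBall Y q.1 q.2).Nonempty) →
    (⋂ p ∈ S, graphBall Y p.1 p.2).Nonempty

/-! In the cell graph, one step is right multiplication by an element of the prefix interval
`[Δ⁻¹, Δ]`, and every element of `[Δ⁻ʳ⁻¹, Δʳ⁺¹]` is one step away from `[Δ⁻ʳ, Δʳ]`; hence the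
ball of radius `r` about `v` is the interval `[vΔ⁻ʳ, vΔʳ]`. Finitely many pairwise intersecting
intervals of a lattice share a point, the join of their lower endpoints; as balls are finite
(they are built from finitely many simple elements), arbitrary families reduce to finite ones.
Connectedness uses the length function: every element of `M` is a product of atoms, which are
simple, and every element of `G` has the form `a⁻¹b` with `a, b ∈ M` by the lattice property. -/

namespace Garside

variable {M : Submonoid G}

section PrefixOrder

lemma prefixRel_refl (x : G) : PrefixRel M x x := by
  simp [PrefixRel, one_mem]

lemma prefixRel_trans {x y z : G} (hxy : PrefixRel M x y) (hyz : PrefixRel M y z) :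
    PrefixRel M x z := by
  simpa [PrefixRel, mul_assoc] using mul_mem hxy hyz

lemma prefixRel_antisymm (hM : ∀ x : G, x ∈ M → x⁻¹ ∈ M → x = 1) {x y : G}
    (hxy : PrefixRel M x y) (hyx : PrefixRel M y x) : x = y :=
  inv_mul_eq_one.mp (hM _ hxy (by simpa [PrefixRel] using hyx))

lemma prefixRel_mul_left_iff (g : G) {x y : G} :
    PrefixRel M (g * x) (g * y) ↔ PrefixRel M x y := by
  simp [PrefixRel, mul_assoc]

lemma prefixRel_mul_right_iff {d : G} (hd : d ∈ Subgroup.normalizer (M : Set G)) {x y : G} :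
    PrefixRel M (x * d) (y * d) ↔ PrefixRel M x y := by
  rw [PrefixRel, PrefixRel, show (x * d)⁻¹ * (y * d) = d⁻¹ * (x⁻¹ * y) * d by group]
  exact (Subgroup.mem_set_normalizer_iff''.mp hd _).symm

lemma prefixRel_mul_self {d : G} (hd : d ∈ M) (x : G) : PrefixRel M x (x * d) := by
  simpa [PrefixRel] using hd

lemma prefixRel_mul_inv_self {d : G} (hd : d ∈ M) (x : G) : PrefixRel M (x * d⁻¹) x := by
  simpa using prefixRel_mul_self hd (x * d⁻¹)

lemma exists_isLUBOf_of_finite (hlp : IsLatticeRel (PrefixRel M)) {s : Set G}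
    (hs : s.Finite) (hne : s.Nonempty) : ∃ x, IsLUBOf (PrefixRel M) s x := by
  induction s, hs using Set.Finite.induction_on with
  | empty => exact absurd hne Set.not_nonempty_empty
  | @insert a s _ _ ih =>
    rcases s.eq_empty_or_nonempty with rfl | hs
    · exact ⟨a, by simp [IsLUBOf, IsUBOf, prefixRel_refl]⟩
    obtain ⟨x, hxub, hxle⟩ := ih hs
    obtain ⟨j, hjub, hjle⟩ := (hlp a x).1
    refine ⟨j, ?_, fun z hz => hjle z ?_⟩
    · rintro y (rfl | hy)
      · exact hjub y (.inl rfl)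
      · exact prefixRel_trans (hxub y hy) (hjub x (.inr rfl))
    · rintro y (rfl | rfl)
      · exact hz y (.inl rfl)
      · exact hxle z fun w hw => hz w (.inr hw)

/-- The largest point of the first interval lying below every upper endpoint lies above every
lower endpoint. -/
lemma exists_forall_mem_intervals (hlp : IsLatticeRel (PrefixRel M)) {ι : Type*} {S : Set ι}
    {L U : ι → G} (hLU : ∀ p ∈ S, ∀ q ∈ S, PrefixRel M (L p) (U q))
    (hfin : ∀ p ∈ S, {x | PrefixRel M (L p) x ∧ PrefixRel M x (U p)}.Finite) :
    ∃ x, ∀ p ∈ S, PrefixRel M (L p) x ∧ PrefixRel M x (U p) := by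
  rcases S.eq_empty_or_nonempty with rfl | ⟨p₀, hp₀⟩
  · exact ⟨1, by simp⟩
  set T := {x | (PrefixRel M (L p₀) x ∧ PrefixRel M x (U p₀)) ∧ ∀ q ∈ S, PrefixRel M x (U q)}
  have hL₀ : L p₀ ∈ T := ⟨⟨prefixRel_refl _, hLU p₀ hp₀ p₀ hp₀⟩, hLU p₀ hp₀⟩
  obtain ⟨x, hxub, hxle⟩ :=
    exists_isLUBOf_of_finite hlp ((hfin p₀ hp₀).subset fun _ h => h.1) ⟨_, hL₀⟩
  refine ⟨x, fun p hp => ⟨?_, hxle (U p) fun y hy => hy.2 p hp⟩⟩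
  obtain ⟨j, hjub, hjle⟩ := (hlp (L p) (L p₀)).1
  have hjU : ∀ q ∈ S, PrefixRel M j (U q) := fun q hq =>
    hjle (U q) (by rintro y (rfl | rfl) <;> exact hLU _ ‹_› q hq)
  have hjT : j ∈ T := ⟨⟨hjub _ (.inr rfl), hjU p₀ hp₀⟩, hjU⟩
  exact prefixRel_trans (hjub _ (.inl rfl)) (hxub j hjT)

lemma isHellyGraph_of_graphBall_eq (hlp : IsLatticeRel (PrefixRel M)) {Y : SimpleGraph G}
    {L U : G → ℕ → G}
    (hball : ∀ v r, graphBall Y v r = {u | PrefixRel M (L v r) u ∧ PrefixRel M u (U v r)})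
    (hfin : ∀ v r, (graphBall Y v r).Finite) : IsHellyGraph Y := by
  intro S hS
  obtain ⟨x, hx⟩ := exists_forall_mem_intervals hlp (S := S) (L := fun p => L p.1 p.2)
    (U := fun p => U p.1 p.2) (fun p hp q hq => by
      obtain ⟨w, hwp, hwq⟩ := hS p hp q hq
      rw [hball] at hwp hwq
      exact prefixRel_trans hwp.1 hwq.2)
    (fun p _ => hball p.1 p.2 ▸ hfin p.1 p.2)
  exact ⟨x, Set.mem_iInter₂.mpr fun p hp => (hball p.1 p.2).symm ▸ hx p hp⟩

end PrefixOrder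

theorem induction_of_isAtom' (lam : G →* Multiplicative ℤ)
    (hlam : ∀ m ∈ M, m ≠ 1 → 0 < (lam m).toAdd) {P : G → Prop} (one : P 1)
    (atom : ∀ a, IsAtom' M a → P a) (mul : ∀ x y, P x → P y → P (x * y)) :
    ∀ m ∈ M, P m := by
  intro m hm
  induction hn : (lam m).toAdd.toNat using Nat.strong_induction_on generalizing m with
  | _ n ih =>
  by_cases h1 : m = 1
  · exact h1 ▸ one
  by_cases hat : IsAtom' M m
  · exact atom m hat
  obtain ⟨x, hx, y, hy, rfl, hx1, hy1⟩ : ∃ x ∈ M, ∃ y ∈ M, m = x * y ∧ x ≠ 1 ∧ y ≠ 1 := by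
    simpa [IsAtom', hm, h1] using hat
  have hsum : (lam (x * y)).toAdd = (lam x).toAdd + (lam y).toAdd := by simp
  have := hlam x hx hx1
  have := hlam y hy hy1
  exact mul x y (ih _ (by omega) x hx rfl) (ih _ (by omega) y hy rfl)


/-- The prefix interval `[Δ⁻ʳ, Δʳ]`, which turns out to be the ball of radius `r` about `1`
(`graphBall_eq`). -/
def deltaInterval (M : Submonoid G) (Δ : G) (r : ℕ) : Set G :=
  {g | PrefixRel M (Δ ^ r)⁻¹ g ∧ PrefixRel M g (Δ ^ r)}

section DeltaInterval

variable {Δ : G}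

lemma one_mem_deltaInterval (hΔ : Δ ∈ M) (r : ℕ) : (1 : G) ∈ deltaInterval M Δ r := by
  simp [deltaInterval, PrefixRel, pow_mem hΔ]

lemma one_mem_deltaInterval_zero : (1 : G) ∈ deltaInterval M Δ 0 := by
  simp [deltaInterval, prefixRel_refl]

lemma eq_one_of_mem_deltaInterval_zero (hM : ∀ x : G, x ∈ M → x⁻¹ ∈ M → x = 1) {g : G}
    (hg : g ∈ deltaInterval M Δ 0) : g = 1 :=
  prefixRel_antisymm hM (by simpa using hg.2) (by simpa using hg.1)

lemma mul_mem_deltaInterval (hΔN : Δ ∈ Subgroup.normalizer (M : Set G)) {g h : G} {a b : ℕ}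
    (hg : g ∈ deltaInterval M Δ a) (hh : h ∈ deltaInterval M Δ b) :
    g * h ∈ deltaInterval M Δ (a + b) := by
  have hb : Δ ^ b ∈ Subgroup.normalizer (M : Set G) := pow_mem hΔN b
  constructor
  · rw [show (Δ ^ (a + b))⁻¹ = (Δ ^ a)⁻¹ * (Δ ^ b)⁻¹ by rw [add_comm, pow_add, mul_inv_rev]]
    exact prefixRel_trans ((prefixRel_mul_right_iff (inv_mem hb)).mpr hg.1)
      ((prefixRel_mul_left_iff g).mpr hh.1)
  · rw [pow_add]
    exact prefixRel_trans ((prefixRel_mul_left_iff g).mpr hh.2)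
      ((prefixRel_mul_right_iff hb).mpr hg.2)

lemma deltaInterval_mono (hΔ : Δ ∈ M) (hΔN : Δ ∈ Subgroup.normalizer (M : Set G)) {a b : ℕ}
    (hab : a ≤ b) : deltaInterval M Δ a ⊆ deltaInterval M Δ b := by
  obtain ⟨c, rfl⟩ := Nat.exists_eq_add_of_le hab
  intro g hg
  simpa using mul_mem_deltaInterval hΔN hg (one_mem_deltaInterval hΔ c)

/-- The point `(g ∧ Δʳ) ∨ Δ⁻ʳ` lies in `[Δ⁻ʳ, Δʳ]` and in the interval `[gΔ⁻¹, gΔ]`. -/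
lemma exists_mem_deltaInterval_inv_mul_mem (hlp : IsLatticeRel (PrefixRel M)) (hΔ : Δ ∈ M)
    (hΔN : Δ ∈ Subgroup.normalizer (M : Set G)) {r : ℕ} {g : G}
    (hg : g ∈ deltaInterval M Δ (r + 1)) :
    ∃ g' ∈ deltaInterval M Δ r, g⁻¹ * g' ∈ deltaInterval M Δ 1 := by
  obtain ⟨m, hmlb, hmle⟩ := (hlp g (Δ ^ r)).2
  obtain ⟨g', hg'ub, hg'le⟩ := (hlp m (Δ ^ r)⁻¹).1
  have hΔr := one_mem_deltaInterval hΔ r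
  have hlow : PrefixRel M (g * Δ⁻¹) g' := by
    refine prefixRel_trans (hmle _ ?_) (hg'ub m (.inl rfl))
    rintro y (rfl | rfl)
    · exact prefixRel_mul_inv_self hΔ y
    · rw [← prefixRel_mul_right_iff hΔN, inv_mul_cancel_right, ← pow_succ]
      exact hg.2
  have hup : PrefixRel M g' (g * Δ) := by
    refine hg'le _ ?_
    rintro y (rfl | rfl)
    · exact prefixRel_trans (hmlb g (.inl rfl)) (prefixRel_mul_self hΔ g)
    · rw [← prefixRel_mul_right_iff (inv_mem hΔN), mul_inv_cancel_right, ← mul_inv_rev,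
        ← pow_succ']
      exact hg.1
  refine ⟨g', ⟨hg'ub _ (.inr rfl), hg'le _ ?_⟩, ?_, ?_⟩
  · rintro y (rfl | rfl)
    · exact hmlb _ (.inr rfl)
    · exact prefixRel_trans hΔr.1 hΔr.2
  · rwa [← prefixRel_mul_left_iff g, mul_inv_cancel_left, pow_one]
  · rwa [← prefixRel_mul_left_iff g, mul_inv_cancel_left, pow_one]

lemma mem_garsideCell_iff {f x : G} : x ∈ GarsideCell M Δ f ↔ IsSimple M Δ (f⁻¹ * x) := by
  simp [GarsideCell, IsSimple, PrefixRel, mul_assoc]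

lemma mul_mem_garsideCell_mul_iff (g : G) {f x : G} :
    g * x ∈ GarsideCell M Δ (g * f) ↔ x ∈ GarsideCell M Δ f := by
  simp only [GarsideCell, Set.mem_ofPred_eq, prefixRel_mul_left_iff, mul_assoc]

lemma exists_garsideCell_iff_one (x y : G) :
    (∃ f, x ∈ GarsideCell M Δ f ∧ y ∈ GarsideCell M Δ f) ↔
      ∃ f, 1 ∈ GarsideCell M Δ f ∧ x⁻¹ * y ∈ GarsideCell M Δ f := by
  constructor
  · rintro ⟨f, hx, hy⟩
    exact ⟨x⁻¹ * f, by simpa using (mul_mem_garsideCell_mul_iff x⁻¹).mpr hx,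
      (mul_mem_garsideCell_mul_iff x⁻¹).mpr hy⟩
  · rintro ⟨f, h1, hy⟩
    exact ⟨x * f, by simpa using (mul_mem_garsideCell_mul_iff x).mpr h1,
      by simpa using (mul_mem_garsideCell_mul_iff x).mpr hy⟩

/-- For `g ∈ [Δ⁻¹, Δ]`, both `1` and `g` lie in the cell based at the meet `1 ∧ g`. -/
lemma mem_deltaInterval_one_iff (hlp : IsLatticeRel (PrefixRel M)) (hΔ : Δ ∈ M)
    (hΔN : Δ ∈ Subgroup.normalizer (M : Set G)) {g : G} :
    g ∈ deltaInterval M Δ 1 ↔ ∃ f, 1 ∈ GarsideCell M Δ f ∧ g ∈ GarsideCell M Δ f := by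
  simp only [deltaInterval, GarsideCell, pow_one, Set.mem_ofPred_eq]
  constructor
  · rintro ⟨hlow, hup⟩
    obtain ⟨f, hflb, hfle⟩ := (hlp 1 g).2
    have hmul : ∀ x, PrefixRel M (x * Δ⁻¹) f → PrefixRel M x (f * Δ) := fun x hx => by
      simpa using (prefixRel_mul_right_iff hΔN).mpr hx
    refine ⟨f, ⟨hflb 1 (.inl rfl), hmul 1 (hfle _ ?_)⟩, hflb g (.inr rfl), hmul g (hfle _ ?_)⟩
    · rintro y (rfl | rfl)
      · exact prefixRel_mul_inv_self hΔ _
      · simpa using hlow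
    · rintro y (rfl | rfl)
      · simpa using (prefixRel_mul_right_iff (inv_mem hΔN)).mpr hup
      · exact prefixRel_mul_inv_self hΔ _
  · rintro ⟨f, ⟨hf1, h1f⟩, hfg, hgf⟩
    refine ⟨prefixRel_trans ?_ hfg, prefixRel_trans hgf ?_⟩
    · simpa using (prefixRel_mul_right_iff (inv_mem hΔN)).mpr h1f
    · simpa using (prefixRel_mul_right_iff hΔN).mpr hf1

lemma mem_deltaInterval_one_of_isSimple (hΔ : Δ ∈ M) {a : G} (ha : IsSimple M Δ a) :
    a ∈ deltaInterval M Δ 1 :=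
  ⟨prefixRel_trans (one_mem_deltaInterval hΔ 1).1 (by simpa [PrefixRel] using ha.1),
    by simpa using ha.2⟩

lemma deltaInterval_one_finite (hlp : IsLatticeRel (PrefixRel M)) (hΔ : Δ ∈ M)
    (hΔN : Δ ∈ Subgroup.normalizer (M : Set G)) (hfin : {a : G | IsSimple M Δ a}.Finite) :
    (deltaInterval M Δ 1).Finite := by
  refine (hfin.image2 (fun a b => a⁻¹ * b) hfin).subset fun g hg => ?_
  obtain ⟨f, h1, hg⟩ := (mem_deltaInterval_one_iff hlp hΔ hΔN).mp hg
  exact ⟨_, mem_garsideCell_iff.mp h1, _, mem_garsideCell_iff.mp hg, by group⟩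

lemma deltaInterval_finite (hM : ∀ x : G, x ∈ M → x⁻¹ ∈ M → x = 1)
    (hlp : IsLatticeRel (PrefixRel M)) (hΔ : Δ ∈ M) (hΔN : Δ ∈ Subgroup.normalizer (M : Set G))
    (hfin : {a : G | IsSimple M Δ a}.Finite) (r : ℕ) : (deltaInterval M Δ r).Finite := by
  induction r with
  | zero =>
    exact (Set.finite_singleton 1).subset fun g hg => eq_one_of_mem_deltaInterval_zero hM hg
  | succ r ih =>
    refine (ih.image2 (fun a b => a * b⁻¹) (deltaInterval_one_finite hlp hΔ hΔN hfin)).subset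
      fun g hg => ?_
    obtain ⟨g', hg', hstep⟩ := exists_mem_deltaInterval_inv_mul_mem hlp hΔ hΔN hg
    exact ⟨g', hg', _, hstep, by group⟩

end DeltaInterval

section CellGraph

variable {Δ : G} {Y : SimpleGraph G}

lemma mem_deltaInterval_of_walk (hΔN : Δ ∈ Subgroup.normalizer (M : Set G))
    (hadj : ∀ x y, Y.Adj x y ↔ x ≠ y ∧ x⁻¹ * y ∈ deltaInterval M Δ 1) {x y : G}
    (w : Y.Walk x y) : x⁻¹ * y ∈ deltaInterval M Δ w.length := by
  induction w with
  | nil => simpa using one_mem_deltaInterval_zero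
  | cons h _ ih =>
    rw [SimpleGraph.Walk.length_cons, add_comm]
    simpa [mul_assoc] using mul_mem_deltaInterval hΔN ((hadj _ _).mp h).2 ih

lemma exists_walk_of_mem_deltaInterval (hM : ∀ x : G, x ∈ M → x⁻¹ ∈ M → x = 1)
    (hlp : IsLatticeRel (PrefixRel M)) (hΔ : Δ ∈ M) (hΔN : Δ ∈ Subgroup.normalizer (M : Set G))
    (hadj : ∀ x y, Y.Adj x y ↔ x ≠ y ∧ x⁻¹ * y ∈ deltaInterval M Δ 1) {r : ℕ} {g : G}
    (hg : g ∈ deltaInterval M Δ r) (x : G) : ∃ w : Y.Walk x (x * g), w.length ≤ r := by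
  induction r generalizing g with
  | zero =>
    obtain rfl := eq_one_of_mem_deltaInterval_zero hM hg
    exact ⟨SimpleGraph.Walk.nil.copy rfl (mul_one x).symm, by simp⟩
  | succ r ih =>
    obtain ⟨g', hg', hstep⟩ := exists_mem_deltaInterval_inv_mul_mem hlp hΔ hΔN hg
    obtain ⟨w, hw⟩ := ih hg'
    by_cases heq : g' = g
    · subst heq
      exact ⟨w, by omega⟩
    have hlast : Y.Adj (x * g') (x * g) :=
      ((hadj _ _).mpr ⟨by simpa using Ne.symm heq, by simpa [mul_assoc] using hstep⟩).symm
    exact ⟨w.concat hlast, by simp [hw]⟩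

lemma dist_le_iff (hM : ∀ x : G, x ∈ M → x⁻¹ ∈ M → x = 1)
    (hlp : IsLatticeRel (PrefixRel M)) (hΔ : Δ ∈ M) (hΔN : Δ ∈ Subgroup.normalizer (M : Set G))
    (hadj : ∀ x y, Y.Adj x y ↔ x ≠ y ∧ x⁻¹ * y ∈ deltaInterval M Δ 1) (hconn : Y.Connected)
    {x y : G} {r : ℕ} : Y.dist x y ≤ r ↔ x⁻¹ * y ∈ deltaInterval M Δ r := by
  constructor
  · intro h
    obtain ⟨w, hw⟩ := (hconn x y).exists_walk_length_eq_dist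
    exact deltaInterval_mono hΔ hΔN (hw ▸ h) (mem_deltaInterval_of_walk hΔN hadj w)
  · intro h
    obtain ⟨w, hw⟩ := exists_walk_of_mem_deltaInterval hM hlp hΔ hΔN hadj h x
    simpa using (SimpleGraph.dist_le w).trans hw

lemma reachable_mul_of_mem (hΔ : Δ ∈ M) (lam : G →* Multiplicative ℤ)
    (hlam : ∀ m ∈ M, m ≠ 1 → 0 < (lam m).toAdd) (hatoms : ∀ a : G, IsAtom' M a → IsSimple M Δ a)
    (hadj : ∀ x y, Y.Adj x y ↔ x ≠ y ∧ x⁻¹ * y ∈ deltaInterval M Δ 1) :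
    ∀ m ∈ M, ∀ x, Y.Reachable x (x * m) := by
  refine induction_of_isAtom' lam hlam (by simp) (fun a ha x => ?_) fun a b ha hb x => ?_
  · refine ((hadj _ _).mpr ⟨?_, ?_⟩).reachable
    · simpa using ha.2.1
    · simpa using mem_deltaInterval_one_of_isSimple hΔ (hatoms a ha)
  · simpa [mul_assoc] using (ha x).trans (hb (x * a))

/-- Every `g` factors as `d · (d⁻¹ g)` with `d = 1 ∧ g`, where `d⁻¹` and `d⁻¹ g` lie in `M`. -/
lemma connected_of_adj_iff (hlp : IsLatticeRel (PrefixRel M)) (hΔ : Δ ∈ M)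
    (lam : G →* Multiplicative ℤ) (hlam : ∀ m ∈ M, m ≠ 1 → 0 < (lam m).toAdd)
    (hatoms : ∀ a : G, IsAtom' M a → IsSimple M Δ a)
    (hadj : ∀ x y, Y.Adj x y ↔ x ≠ y ∧ x⁻¹ * y ∈ deltaInterval M Δ 1) : Y.Connected := by
  have hreach := reachable_mul_of_mem hΔ lam hlam hatoms hadj
  refine Y.connected_iff_exists_forall_reachable.mpr ⟨1, fun g => ?_⟩
  obtain ⟨d, hdlb, -⟩ := (hlp 1 g).2
  have hd : Y.Reachable d 1 := by
    simpa using hreach d⁻¹ (by simpa [PrefixRel] using hdlb 1 (.inl rfl)) d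
  have hdg : Y.Reachable d g := by
    simpa using hreach _ (hdlb g (.inr rfl)) d
  exact hd.symm.trans hdg

lemma graphBall_eq (hM : ∀ x : G, x ∈ M → x⁻¹ ∈ M → x = 1)
    (hlp : IsLatticeRel (PrefixRel M)) (hΔ : Δ ∈ M) (hΔN : Δ ∈ Subgroup.normalizer (M : Set G))
    (hadj : ∀ x y, Y.Adj x y ↔ x ≠ y ∧ x⁻¹ * y ∈ deltaInterval M Δ 1) (hconn : Y.Connected)
    (v : G) (r : ℕ) :
    graphBall Y v r = {u | PrefixRel M (v * (Δ ^ r)⁻¹) u ∧ PrefixRel M u (v * Δ ^ r)} := by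
  ext u
  rw [graphBall, Set.mem_ofPred_eq, dist_le_iff hM hlp hΔ hΔN hadj hconn]
  exact and_congr (by rw [← prefixRel_mul_left_iff v, mul_inv_cancel_left])
    (by rw [← prefixRel_mul_left_iff v, mul_inv_cancel_left])

lemma graphBall_finite (hM : ∀ x : G, x ∈ M → x⁻¹ ∈ M → x = 1)
    (hlp : IsLatticeRel (PrefixRel M)) (hΔ : Δ ∈ M) (hΔN : Δ ∈ Subgroup.normalizer (M : Set G))
    (hfin : {a : G | IsSimple M Δ a}.Finite)
    (hadj : ∀ x y, Y.Adj x y ↔ x ≠ y ∧ x⁻¹ * y ∈ deltaInterval M Δ 1) (hconn : Y.Connected)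
    (v : G) (r : ℕ) : (graphBall Y v r).Finite :=
  ((deltaInterval_finite hM hlp hΔ hΔN hfin r).image (v * ·)).subset fun u hu =>
    ⟨v⁻¹ * u, (dist_le_iff hM hlp hΔ hΔN hadj hconn).mp hu, mul_inv_cancel_left v u⟩

end CellGraph

end Garside

open Garside

theorem garside_group_acts_on_helly_graph_general (M : Submonoid G)
    (hM : ∀ x : G, x ∈ M → x⁻¹ ∈ M → x = 1)
    (hlp : IsLatticeRel (PrefixRel M))
    (Δ : G) (hΔ : Δ ∈ M) (hconj : ∀ x : G, x ∈ M ↔ Δ * x * Δ⁻¹ ∈ M)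
    (lam : G →* Multiplicative ℤ)
    (hlam_nonneg : ∀ m ∈ M, 0 ≤ (lam m).toAdd)
    (hlam_zero : ∀ m ∈ M, ((lam m).toAdd = 0 ↔ m = 1))
    (hatoms : ∀ a : G, IsAtom' M a → IsSimple M Δ a)
    (hfin : {a : G | IsSimple M Δ a}.Finite)
    (Y : SimpleGraph G)
    (hY : ∀ x y : G, Y.Adj x y ↔
      x ≠ y ∧ ∃ f : G, x ∈ GarsideCell M Δ f ∧ y ∈ GarsideCell M Δ f) :
    Y.Connected ∧
    (∀ v : G, (Y.neighborSet v).Finite) ∧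
    IsHellyGraph Y ∧
    (∀ g x y : G, Y.Adj x y ↔ Y.Adj (g * x) (g * y)) ∧
    (∀ x y : G, ∃! g : G, g * x = y) := by
  have hΔN : Δ ∈ Subgroup.normalizer (M : Set G) := hconj
  have hlam : ∀ m ∈ M, m ≠ 1 → 0 < (lam m).toAdd := fun m hm h1 =>
    (hlam_nonneg m hm).lt_of_ne fun h => h1 ((hlam_zero m hm).mp h.symm)
  have hadj : ∀ x y, Y.Adj x y ↔ x ≠ y ∧ x⁻¹ * y ∈ deltaInterval M Δ 1 := fun x y => by
    rw [hY, exists_garsideCell_iff_one, mem_deltaInterval_one_iff hlp hΔ hΔN]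
  have hconn := connected_of_adj_iff hlp hΔ lam hlam hatoms hadj
  have hball := graphBall_finite hM hlp hΔ hΔN hfin hadj hconn
  refine ⟨hconn, fun v => (hball v 1).subset fun u hu => ?_,
    isHellyGraph_of_graphBall_eq hlp (graphBall_eq hM hlp hΔ hΔN hadj hconn) hball,
    fun g x y => by simp [hadj, mul_assoc],
    fun x y => ⟨y * x⁻¹, inv_mul_cancel_right y x, fun g hg => by rw [← hg, mul_inv_cancel_right]⟩⟩
  exact (SimpleGraph.dist_eq_one_iff_adj.mpr hu).le

/-- **Garside groups of finite type are Helly.** Under the Garside-type hypotheses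
(a length homomorphism `λ : G → ℤ` positive on `M` and vanishing only at `1`; all atoms
simple; finitely many simple elements), the graph `Y` on `G` in which distinct vertices
are adjacent iff they lie in a common cell is a connected, locally finite Helly graph; and
left multiplication preserves adjacency (so `G` acts on `Y` by graph automorphisms), this
action being free and transitive on vertices. -/
theorem garside_group_acts_on_helly_graph (M : Submonoid G)
    (hM : ∀ x : G, x ∈ M → x⁻¹ ∈ M → x = 1)
    (hlp : IsLatticeRel (PrefixRel M)) (hls : IsLatticeRel (SuffixRel M))
    (Δ : G) (hΔ : Δ ∈ M) (hconj : ∀ x : G, x ∈ M ↔ Δ * x * Δ⁻¹ ∈ M)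
    (lam : G →* Multiplicative ℤ)
    (hlam_nonneg : ∀ m ∈ M, 0 ≤ (lam m).toAdd)
    (hlam_zero : ∀ m ∈ M, ((lam m).toAdd = 0 ↔ m = 1))
    (hatoms : ∀ a : G, IsAtom' M a → IsSimple M Δ a)
    (hfin : {a : G | IsSimple M Δ a}.Finite)
    (Y : SimpleGraph G)
    (hY : ∀ x y : G, Y.Adj x y ↔
      x ≠ y ∧ ∃ f : G, x ∈ GarsideCell M Δ f ∧ y ∈ GarsideCell M Δ f) :
    Y.Connected ∧
    (∀ v : G, (Y.neighborSet v).Finite) ∧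
    IsHellyGraph Y ∧
    (∀ g x y : G, Y.Adj x y ↔ Y.Adj (g * x) (g * y)) ∧
    (∀ x y : G, ∃! g : G, g * x = y) :=
  garside_group_acts_on_helly_graph_general M hM hlp Δ hΔ hconj lam hlam_nonneg hlam_zero hatoms
    hfin Y hY
end

section
/- Let f₁, f₂, f₃ ∈ G and suppose the cells C_{f₁}, C_{f₂}, C_{f₃} pairwise intersect. Then there exists f ∈ G such that (C_{f₁} ∩ C_{f₂}) ∪ (C_{f₂} ∩ C_{f₃}) ∪ (C_{f₃} ∩ C_{f₁}) ⊆ C_f. -/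
variable {G : Type*} [Group G]

lemma prefixRel_trans {M : Submonoid G} {x y z : G}
    (h1 : PrefixRel M x y) (h2 : PrefixRel M y z) : PrefixRel M x z := by
  have := M.mul_mem h1 h2
  simpa [PrefixRel, mul_assoc] using this

lemma prefixRel_mul_right {M : Submonoid G} {Δ : G}
    (hconj : ∀ x : G, x ∈ M ↔ Δ * x * Δ⁻¹ ∈ M) {x y : G} :
    PrefixRel M x y ↔ PrefixRel M (x * Δ) (y * Δ) := by
  unfold PrefixRel
  constructor
  · intro h
    have h2 : Δ⁻¹ * (x⁻¹ * y) * Δ ∈ M := by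
      rw [hconj]
      simpa [mul_assoc] using h
    simpa [mul_assoc] using h2
  · intro h
    have h2 : Δ⁻¹ * (x⁻¹ * y) * Δ ∈ M := by
      simpa [mul_assoc] using h
    rw [hconj] at h2
    simpa [mul_assoc] using h2

/-- If three cells `C_{f₁}, C_{f₂}, C_{f₃}` pairwise intersect, then the union of
their pairwise intersections is contained in a single cell `C_f`. -/
theorem cells_triple_intersection_in_cell (M : Submonoid G)
    (hM : ∀ x : G, x ∈ M → x⁻¹ ∈ M → x = 1)
    (hlp : IsLatticeRel (PrefixRel M)) (hls : IsLatticeRel (SuffixRel M))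
    (Δ : G) (hΔ : Δ ∈ M) (hconj : ∀ x : G, x ∈ M ↔ Δ * x * Δ⁻¹ ∈ M)
    (f₁ f₂ f₃ : G)
    (h12 : (GarsideCell M Δ f₁ ∩ GarsideCell M Δ f₂).Nonempty)
    (h23 : (GarsideCell M Δ f₂ ∩ GarsideCell M Δ f₃).Nonempty)
    (h31 : (GarsideCell M Δ f₃ ∩ GarsideCell M Δ f₁).Nonempty) :
    ∃ f : G,
      (GarsideCell M Δ f₁ ∩ GarsideCell M Δ f₂) ∪
        (GarsideCell M Δ f₂ ∩ GarsideCell M Δ f₃) ∪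
        (GarsideCell M Δ f₃ ∩ GarsideCell M Δ f₁) ⊆ GarsideCell M Δ f := by
  classical
  set le := PrefixRel M with hle
  -- joins of the three pairs
  obtain ⟨j12, hj12⟩ := (hlp f₁ f₂).1
  obtain ⟨j23, hj23⟩ := (hlp f₂ f₃).1
  obtain ⟨j31, hj31⟩ := (hlp f₃ f₁).1
  -- meet of the three joins
  obtain ⟨g, hg⟩ := (hlp j12 j23).2
  obtain ⟨f, hf⟩ := (hlp g j31).2
  -- basic facts
  have hf_g : le f g := hf.1 g (Set.mem_insert _ _)
  have hf_j31 : le f j31 := hf.1 j31 (Set.mem_insert_of_mem _ rfl)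
  have hf_j12 : le f j12 := prefixRel_trans hf_g (hg.1 j12 (Set.mem_insert _ _))
  have hf_j23 : le f j23 :=
    prefixRel_trans hf_g (hg.1 j23 (Set.mem_insert_of_mem _ rfl))
  -- f_i ≼ j for each join containing it
  have h1_j12 : le f₁ j12 := hj12.1 f₁ (Set.mem_insert _ _)
  have h2_j12 : le f₂ j12 := hj12.1 f₂ (Set.mem_insert_of_mem _ rfl)
  have h2_j23 : le f₂ j23 := hj23.1 f₂ (Set.mem_insert _ _)
  have h3_j23 : le f₃ j23 := hj23.1 f₃ (Set.mem_insert_of_mem _ rfl)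
  have h3_j31 : le f₃ j31 := hj31.1 f₃ (Set.mem_insert _ _)
  have h1_j31 : le f₁ j31 := hj31.1 f₁ (Set.mem_insert_of_mem _ rfl)
  refine ⟨f, ?_⟩
  have upper : ∀ x : G, le (x * Δ⁻¹) f₁ ∧ le (x * Δ⁻¹) f₂ ∨
      le (x * Δ⁻¹) f₂ ∧ le (x * Δ⁻¹) f₃ ∨
      le (x * Δ⁻¹) f₃ ∧ le (x * Δ⁻¹) f₁ → le x (f * Δ) := by
    intro x hx
    have hj : le (x * Δ⁻¹) j12 ∧ le (x * Δ⁻¹) j23 ∧ le (x * Δ⁻¹) j31 := by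
      rcases hx with ⟨h1, h2⟩ | ⟨h2, h3⟩ | ⟨h3, h1⟩
      · exact ⟨prefixRel_trans h1 h1_j12, prefixRel_trans h2 h2_j23,
          prefixRel_trans h1 h1_j31⟩
      · exact ⟨prefixRel_trans h2 h2_j12, prefixRel_trans h2 h2_j23,
          prefixRel_trans h3 h3_j31⟩
      · exact ⟨prefixRel_trans h1 h1_j12, prefixRel_trans h3 h3_j23,
          prefixRel_trans h3 h3_j31⟩
    have hg' : le (x * Δ⁻¹) g := by
      apply hg.2
      intro y hy
      rcases hy with rfl | hy
      · exact hj.1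
      · rcases hy with rfl
        exact hj.2.1
    have hf' : le (x * Δ⁻¹) f := by
      apply hf.2
      intro y hy
      rcases hy with rfl | hy
      · exact hg'
      · rcases hy with rfl
        exact hj.2.2
    have := (prefixRel_mul_right hconj (x := x * Δ⁻¹) (y := f)).mp hf'
    simpa using this
  intro x hx
  rcases hx with (⟨⟨h1l, h1u⟩, ⟨h2l, h2u⟩⟩ | ⟨⟨h2l, h2u⟩, ⟨h3l, h3u⟩⟩) |
    ⟨⟨h3l, h3u⟩, ⟨h1l, h1u⟩⟩
  all_goals
    constructor
  · -- f ≼ x, case 12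
    exact prefixRel_trans hf_j12 (hj12.2 x (by
      intro y hy
      rcases hy with rfl | hy
      · exact h1l
      · rcases hy with rfl; exact h2l))
  · exact upper x (Or.inl ⟨by
      have := (prefixRel_mul_right hconj (x := x * Δ⁻¹) (y := f₁)).mpr (by simpa using h1u)
      exact this, by
      have := (prefixRel_mul_right hconj (x := x * Δ⁻¹) (y := f₂)).mpr (by simpa using h2u)
      exact this⟩)
  · exact prefixRel_trans hf_j23 (hj23.2 x (by
      intro y hy
      rcases hy with rfl | hy
      · exact h2l
      · rcases hy with rfl; exact h3l))
  · exact upper x (Or.inr (Or.inl ⟨by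
      have := (prefixRel_mul_right hconj (x := x * Δ⁻¹) (y := f₂)).mpr (by simpa using h2u)
      exact this, by
      have := (prefixRel_mul_right hconj (x := x * Δ⁻¹) (y := f₃)).mpr (by simpa using h3u)
      exact this⟩))
  · exact prefixRel_trans hf_j31 (hj31.2 x (by
      intro y hy
      rcases hy with rfl | hy
      · exact h3l
      · rcases hy with rfl; exact h1l))
  · exact upper x (Or.inr (Or.inr ⟨by
      have := (prefixRel_mul_right hconj (x := x * Δ⁻¹) (y := f₃)).mpr (by simpa using h3u)
      exact this, by
      have := (prefixRel_mul_right hconj (x := x * Δ⁻¹) (y := f₁)).mpr (by simpa using h1u)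
      exact this⟩))
end

section
/- For all x, y ∈ G, the following are equivalent: (i) there exists f ∈ G with x ∈ C_f and y ∈ C_f; (ii) x⁻¹y = a⁻¹b for some simple elements a, b. Consequently, if the set of simple elements is finite of cardinality N, then every vertex of the graph on G (distinct vertices adjacent iff they lie in a common cell) has at most N² neighbours. -/
variable {G : Type*} [Group G]

/-- Two elements `x, y` lie in a common cell iff `x⁻¹y = a⁻¹b` for simple elements
`a, b`; consequently, if there are `N` simple elements then every vertex of the graph on
`G` (distinct vertices adjacent iff they lie in a common cell) has at most `N²`
neighbours. -/
theorem mem_common_cell_iff_and_degree_bound (M : Submonoid G)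
    (hM : ∀ x : G, x ∈ M → x⁻¹ ∈ M → x = 1)
    (Δ : G) (hΔ : Δ ∈ M) (hconj : ∀ x : G, x ∈ M ↔ Δ * x * Δ⁻¹ ∈ M) :
    (∀ x y : G,
      (∃ f : G, x ∈ GarsideCell M Δ f ∧ y ∈ GarsideCell M Δ f) ↔
      (∃ a b : G, IsSimple M Δ a ∧ IsSimple M Δ b ∧ x⁻¹ * y = a⁻¹ * b)) ∧
    (∀ N : ℕ, ({a : G | IsSimple M Δ a}.Finite ∧ {a : G | IsSimple M Δ a}.ncard = N) →
      ∀ x : G,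
        {y : G | y ≠ x ∧ ∃ f : G, x ∈ GarsideCell M Δ f ∧ y ∈ GarsideCell M Δ f}.Finite ∧
        {y : G | y ≠ x ∧ ∃ f : G, x ∈ GarsideCell M Δ f ∧ y ∈ GarsideCell M Δ f}.ncard
          ≤ N ^ 2) := by
  have key : ∀ x y : G,
      (∃ f : G, x ∈ GarsideCell M Δ f ∧ y ∈ GarsideCell M Δ f) ↔
      (∃ a b : G, IsSimple M Δ a ∧ IsSimple M Δ b ∧ x⁻¹ * y = a⁻¹ * b) := by
    intro x y
    constructor
    · rintro ⟨f, ⟨hfx, hxΔ⟩, ⟨hfy, hyΔ⟩⟩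
      refine ⟨f⁻¹ * x, f⁻¹ * y, ⟨hfx, ?_⟩, ⟨hfy, ?_⟩, by group⟩
      · simpa [PrefixRel, mul_assoc] using hxΔ
      · simpa [PrefixRel, mul_assoc] using hyΔ
    · rintro ⟨a, b, ⟨ha, haΔ⟩, ⟨hb, hbΔ⟩, hab⟩
      refine ⟨x * a⁻¹, ⟨?_, ?_⟩, ⟨?_, ?_⟩⟩
      · simpa [PrefixRel, mul_assoc] using ha
      · simpa [PrefixRel, mul_assoc] using haΔ
      · have : (x * a⁻¹)⁻¹ * y = b := by
          rw [mul_inv_rev, inv_inv, mul_assoc, hab]; group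
        show (x * a⁻¹)⁻¹ * y ∈ M
        rw [this]; exact hb
      · have : y⁻¹ * (x * a⁻¹ * Δ) = b⁻¹ * Δ := by
          have h2 : y = x * (a⁻¹ * b) := by
            rw [← hab]; group
          rw [h2]; group
        simpa [PrefixRel, this] using hbΔ
  refine ⟨key, ?_⟩
  rintro N ⟨hfin, hcard⟩ x
  set S := {a : G | IsSimple M Δ a}
  set T := {y : G | y ≠ x ∧ ∃ f : G, x ∈ GarsideCell M Δ f ∧ y ∈ GarsideCell M Δ f}
  have hsub : T ⊆ (fun p : G × G => x * (p.1⁻¹ * p.2)) '' (S ×ˢ S) := by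
    rintro y ⟨-, hy⟩
    obtain ⟨a, b, ha, hb, hab⟩ := (key x y).mp hy
    exact ⟨(a, b), ⟨ha, hb⟩, by show x * (a⁻¹ * b) = y; rw [← hab]; group⟩
  have hprod : (S ×ˢ S).Finite := hfin.prod hfin
  have himg := hprod.image (fun p : G × G => x * (p.1⁻¹ * p.2))
  refine ⟨himg.subset hsub, ?_⟩
  calc T.ncard ≤ _ := Set.ncard_le_ncard hsub himg
    _ ≤ (S ×ˢ S).ncard := Set.ncard_image_le hprod
    _ = N ^ 2 := by
        haveI := hfin.fintype
        haveI := hprod.fintype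
        rw [Set.ncard_eq_toFinset_card' (S ×ˢ S), Set.toFinset_prod, Finset.card_product,
          ← Set.ncard_eq_toFinset_card' S, hcard, sq]
end

section
/- Let W be a Coxeter group with Coxeter system (W, {s_i}_{i∈B}). Let R₁, …, Rₙ be finitely many left cosets of standard parabolic subgroups of W (i.e., each R_k = w_k · W_{T_k} for some w_k ∈ W and T_k ⊆ B, where W_{T_k} is the subgroup generated by {s_i : i ∈ T_k}). If the R_k pairwise intersect, then ⋂_{k=1}^{n} R_k ≠ ∅. -/
/-!
Cosets of standard parabolic subgroups are gated for the word metric `d x y = ℓ (x⁻¹ * y)`: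
if `m` has minimal length in `m • W_T` then `ℓ (m * u) = ℓ m + ℓ u` for all `u ∈ W_T`, by the
exchange condition, so the minimal-length element of `a⁻¹ • (w • W_T)` translates to the gate of
`a` in `w • W_T`. In any metric space, gated sets are convex, two intersecting gated sets meet in a
gated set, and three pairwise intersecting gated sets have a common point (the gate in `X` of a
point of `Y ∩ Z` lies in `Y` and in `Z`); induction on the number of sets gives the Helly property.

The exchange condition comes from the reflection cocycle: the parity of the number of occurrences
of `t` in the left inversion sequence of a word only depends on the element the word represents,
since it is read off the image of that element under a homomorphism `W →* (W → ℤˣ) ⋊ W`.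
-/

open scoped Pointwise

namespace Metric

variable {α ι : Type*} [MetricSpace α]

def IsGated (X : Set α) : Prop :=
  ∀ a, ∃ g ∈ X, ∀ x ∈ X, dist a x = dist a g + dist g x

namespace IsGated

variable {X Y Z : Set α}

theorem mem_of_dist_add_dist_eq (hX : IsGated X) {a x z : α} (ha : a ∈ X) (hx : x ∈ X)
    (h : dist a z + dist z x = dist a x) : z ∈ X := by
  obtain ⟨g, hg, hgate⟩ := hX z
  have hza := hgate a ha
  have hzx := hgate x hx
  have hzg : dist z g = 0 := by
    linarith [dist_triangle a g x, dist_comm a z, dist_comm a g, dist_nonneg (x := z) (y := g)]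
  rwa [dist_eq_zero.1 hzg]

theorem inter (hX : IsGated X) (hY : IsGated Y) (hXY : (X ∩ Y).Nonempty) :
    IsGated (X ∩ Y) := by
  intro z
  obtain ⟨a, ha, hza⟩ := hX z
  obtain ⟨g, hg, hag⟩ := hY a
  obtain ⟨c, hcX, hcY⟩ := hXY
  have hgX : g ∈ X := hX.mem_of_dist_add_dist_eq ha hcX (hag c hcY).symm
  refine ⟨g, ⟨hgX, hg⟩, fun x hx ↦ ?_⟩
  rw [hza x hx.1, hag x hx.2, hza g hgX, add_assoc]

theorem inter_inter_nonempty (hX : IsGated X) (hY : IsGated Y) (hZ : IsGated Z)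
    (hXY : (X ∩ Y).Nonempty) (hXZ : (X ∩ Z).Nonempty) (hYZ : (Y ∩ Z).Nonempty) :
    (X ∩ Y ∩ Z).Nonempty := by
  obtain ⟨a, haY, haZ⟩ := hYZ
  obtain ⟨g, hgX, hgate⟩ := hX a
  obtain ⟨x, hxX, hxY⟩ := hXY
  obtain ⟨y, hyX, hyZ⟩ := hXZ
  exact ⟨g, ⟨hgX, hY.mem_of_dist_add_dist_eq haY hxY (hgate x hxX).symm⟩,
    hZ.mem_of_dist_add_dist_eq haZ hyZ (hgate y hyX).symm⟩

theorem inter_biInter_nonempty {X : ι → Set α} (hX : ∀ i, IsGated (X i))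
    (hXX : ∀ i j, (X i ∩ X j).Nonempty) (s : Finset ι) (j : ι) :
    (X j ∩ ⋂ i ∈ s, X i).Nonempty := by
  classical
  induction s using Finset.induction_on generalizing X j with
  | empty => simpa using hXX j j
  | insert k s _ ih =>
    have key := ih (X := fun i ↦ X i ∩ X k) (fun i ↦ (hX i).inter (hX k) (hXX i k))
      (fun i i' ↦
        ((hX i).inter_inter_nonempty (hX i') (hX k) (hXX i i') (hXX i k) (hXX i' k)).mono
          fun z hz ↦ ⟨⟨hz.1.1, hz.2⟩, hz.1.2, hz.2⟩) j
    refine key.mono fun z hz ↦ ?_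
    simp only [Set.mem_inter_iff, Set.mem_iInter, Finset.mem_insert] at hz ⊢
    exact ⟨hz.1.1, fun i hi ↦ hi.elim (· ▸ hz.1.2) fun hi ↦ (hz.2 i hi).1⟩

theorem iInter_nonempty [Nonempty α] [Finite ι] {X : ι → Set α} (hX : ∀ i, IsGated (X i))
    (hXX : ∀ i j, (X i ∩ X j).Nonempty) : (⋂ i, X i).Nonempty := by
  have := Fintype.ofFinite ι
  rcases isEmpty_or_nonempty ι with hι | ⟨⟨j⟩⟩
  · simp
  · exact (inter_biInter_nonempty hX hXX Finset.univ j).mono fun z hz ↦ by simpa using hz.2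

end IsGated

end Metric

namespace CoxeterSystem

open List

variable {B W : Type*} [Group W] {M : CoxeterMatrix B} (cs : CoxeterSystem M W)

theorem prod_map_alternatingWord {G : Type*} [Monoid G] (f : B → G) (i j : B) (p : ℕ) :
    ((alternatingWord i j (2 * p)).map f).prod = (f i * f j) ^ p := by
  induction p with
  | zero => simp [alternatingWord]
  | succ p ih =>
    rw [mul_add_one, alternatingWord_succ', alternatingWord_succ', pow_succ', ← ih]
    simp [mul_assoc]

theorem leftInvSeq_alternatingWord (i j : B) (p : ℕ) :
    cs.leftInvSeq (alternatingWord i j (2 * p)) =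
      (range (2 * p)).map fun k ↦ cs.simple i * (cs.simple j * cs.simple i) ^ k := by
  refine ext_getElem (by simp) fun k hk _ ↦ ?_
  rw [getElem_leftInvSeq_alternatingWord cs i j p k (by simpa using hk),
    prod_alternatingWord_eq_mul_pow]
  simp [Nat.mul_add_div]

variable {cs} in
theorem IsReduced.length_wordProd_eraseIdx_lt {ω : List B} (hω : cs.IsReduced ω) {k : ℕ}
    (hk : k < ω.length) : cs.length (cs.wordProd (ω.eraseIdx k)) < cs.length (cs.wordProd ω) :=
  calc cs.length (cs.wordProd (ω.eraseIdx k))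
      ≤ (ω.eraseIdx k).length := cs.length_wordProd_le _
    _ < cs.length (cs.wordProd ω) := by rw [hω.eq, length_eraseIdx_of_lt hk]; omega

def conjArrow : W →* MulAut (W → ℤˣ) :=
  (mulAutArrow (G := ConjAct W) (A := W) (M := ℤˣ)).comp ConjAct.toConjAct.toMonoidHom

theorem conjArrow_apply (w : W) (f : W → ℤˣ) (x : W) : conjArrow w f x = f (w⁻¹ * x * w) := by
  show f ((ConjAct.toConjAct w)⁻¹ • x) = _
  rw [← ConjAct.toConjAct_inv, ConjAct.toConjAct_smul, inv_inv]

section SignHom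

variable [DecidableEq W]

def signLift (i : B) : (W → ℤˣ) ⋊[conjArrow] W :=
  ⟨Pi.mulSingle (cs.simple i) (-1), cs.simple i⟩

theorem prod_map_signLift (ω : List B) :
    (ω.map cs.signLift).prod = ⟨fun t ↦ (-1) ^ (cs.leftInvSeq ω).count t, cs.wordProd ω⟩ := by
  induction ω with
  | nil => rfl
  | cons i ω ih =>
    rw [map_cons, prod_cons, ih]
    ext t
    · have hconj : count t ((cs.leftInvSeq ω).map (MulAut.conj (cs.simple i))) =
          count (cs.simple i * t * cs.simple i) (cs.leftInvSeq ω) := by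
        conv_lhs => rw [show t = MulAut.conj (cs.simple i) (cs.simple i * t * cs.simple i) by
          simp [mul_assoc]]
        exact count_map_of_injective _ _ (MulAut.conj (cs.simple i)).injective _
      simp only [SemidirectProduct.mul_left, signLift, Pi.mul_apply, conjArrow_apply, inv_simple,
        leftInvSeq, count_cons, hconj, pow_add]
      by_cases ht : t = cs.simple i <;> simp [ht, Ne.symm]
    · simp [signLift, wordProd_cons]

theorem even_count_leftInvSeq_alternatingWord (i j : B) (t : W) :
    Even ((cs.leftInvSeq (alternatingWord i j (2 * M i j))).count t) := by
  have hperiod : ∀ k, cs.simple i * (cs.simple j * cs.simple i) ^ (M i j + k) =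
      cs.simple i * (cs.simple j * cs.simple i) ^ k := by
    simp [pow_add]
  rw [leftInvSeq_alternatingWord, two_mul, range_add, map_append, map_map]
  simp only [Function.comp_def, hperiod, count_append]
  exact ⟨_, rfl⟩

theorem isLiftable_signLift : M.IsLiftable cs.signLift := by
  intro i j
  rw [← prod_map_alternatingWord, prod_map_signLift]
  ext t
  · simpa [neg_one_pow_eq_one_iff_even] using cs.even_count_leftInvSeq_alternatingWord i j t
  · simp [prod_alternatingWord_eq_mul_pow]

noncomputable def signHom : W →* (W → ℤˣ) ⋊[conjArrow] W :=
  cs.lift ⟨cs.signLift, cs.isLiftable_signLift⟩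

theorem signHom_wordProd (ω : List B) :
    cs.signHom (cs.wordProd ω) = ⟨fun t ↦ (-1) ^ (cs.leftInvSeq ω).count t, cs.wordProd ω⟩ := by
  rw [← prod_map_signLift, wordProd, map_list_prod, map_map]
  congr 2
  funext i
  exact cs.lift_apply_simple cs.isLiftable_signLift i

theorem even_count_leftInvSeq_iff {ω ω' : List B} (h : cs.wordProd ω = cs.wordProd ω')
    (t : W) : Even ((cs.leftInvSeq ω).count t) ↔ Even ((cs.leftInvSeq ω').count t) := by
  have := congrArg (fun x ↦ x.left t) (congrArg cs.signHom h)
  simp only [signHom_wordProd] at this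
  rw [← neg_one_pow_eq_one_iff_even (R := ℤˣ) (by decide), this,
    neg_one_pow_eq_one_iff_even (by decide)]

end SignHom

theorem simple_mem_leftInvSeq_of_isLeftDescent {ω : List B} {i : B}
    (h : cs.IsLeftDescent (cs.wordProd ω) i) : cs.simple i ∈ cs.leftInvSeq ω := by
  classical
  obtain ⟨ω', hω', hprod'⟩ := cs.exists_isReduced (cs.simple i * cs.wordProd ω)
  have hprod : cs.wordProd (i :: ω') = cs.wordProd ω := by
    rw [wordProd_cons, ← hprod', simple_mul_simple_cancel_left]
  have hred : cs.IsReduced (i :: ω') := by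
    have := cs.isLeftDescent_iff.1 h
    rw [hprod'] at this
    rw [IsReduced, hprod, length_cons, ← this, hω'.eq]
  have hcount : (cs.leftInvSeq (i :: ω')).count (cs.simple i) = 1 :=
    count_eq_one_of_mem hred.nodup_leftInvSeq mem_cons_self
  by_contra hmem
  have := (cs.even_count_leftInvSeq_iff hprod (cs.simple i)).2
  rw [count_eq_zero_of_not_mem hmem, hcount] at this
  exact Nat.not_even_one (this ⟨0, rfl⟩)

theorem exists_eraseIdx_of_isRightDescent {ω : List B} {i : B}
    (h : cs.IsRightDescent (cs.wordProd ω) i) :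
    ∃ j < ω.length, cs.wordProd ω * cs.simple i = cs.wordProd (ω.eraseIdx j) := by
  have hrev : cs.IsLeftDescent (cs.wordProd ω.reverse) i := by
    rwa [wordProd_reverse, isLeftDescent_inv_iff]
  have hmem := cs.simple_mem_leftInvSeq_of_isLeftDescent hrev
  rw [leftInvSeq_reverse, mem_reverse] at hmem
  obtain ⟨j, hj, hget⟩ := mem_iff_getElem.1 hmem
  refine ⟨j, by simpa using hj, ?_⟩
  rw [← wordProd_mul_getD_rightInvSeq, getD_eq_getElem _ _ hj, hget]

theorem isRightDescent_or_length_mul_conj_lt {a b : W} {i : B}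
    (h : cs.IsRightDescent (a * b) i) :
    cs.IsRightDescent b i ∨ cs.length (a * (b * cs.simple i * b⁻¹)) < cs.length a := by
  obtain ⟨α, hα, rfl⟩ := cs.exists_isReduced a
  obtain ⟨β, hβ, rfl⟩ := cs.exists_isReduced b
  rw [← wordProd_append] at h
  obtain ⟨j, hj, hdel⟩ := cs.exists_eraseIdx_of_isRightDescent h
  rw [wordProd_append] at hdel
  rcases lt_or_ge j α.length with hjα | hjα
  · right
    rw [eraseIdx_append_of_lt_length hjα, wordProd_append] at hdel
    have hconj : cs.wordProd α * (cs.wordProd β * cs.simple i * (cs.wordProd β)⁻¹) =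
        cs.wordProd (α.eraseIdx j) := by
      rw [← mul_inv_eq_iff_eq_mul.2 hdel]
      group
    rw [hconj]
    exact hα.length_wordProd_eraseIdx_lt hjα
  · left
    rw [eraseIdx_append_of_length_le hjα, wordProd_append, mul_assoc] at hdel
    rw [IsRightDescent, mul_left_cancel hdel]
    exact hβ.length_wordProd_eraseIdx_lt (by rw [length_append] at hj; omega)

theorem length_mul_mul_simple_of_forall_length_le {H : Subgroup W} {m x : W} {i : B}
    (hm : ∀ t ∈ H, cs.length m ≤ cs.length (m * t)) (hx : x ∈ H) (hi : cs.simple i ∈ H)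
    (hmx : cs.length (m * x) = cs.length m + cs.length x) :
    cs.length (m * (x * cs.simple i)) = cs.length m + cs.length (x * cs.simple i) := by
  have hle := cs.length_mul_le m (x * cs.simple i)
  rw [← mul_assoc] at hle ⊢
  rcases cs.length_mul_simple x i with hxi | hxi
  · have hmxi : ¬cs.IsRightDescent (m * x) i := fun hdesc ↦
      (cs.isRightDescent_or_length_mul_conj_lt hdesc).elim
        (fun hdesc ↦ by rw [IsRightDescent] at hdesc; omega)
        fun hlt ↦ (hm _ (mul_mem (mul_mem hx hi) (inv_mem hx))).not_gt hlt
    rcases cs.length_mul_simple (m * x) i with h | h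
    · omega
    · exact absurd (cs.isRightDescent_iff.2 h) hmxi
  · rcases cs.length_mul_simple (m * x) i with h | h <;> omega

theorem length_mul_eq_add_of_forall_length_le {T : Set B} {m u : W}
    (hm : ∀ t ∈ Subgroup.closure (cs.simple '' T), cs.length m ≤ cs.length (m * t))
    (hu : u ∈ Subgroup.closure (cs.simple '' T)) :
    cs.length (m * u) = cs.length m + cs.length u := by
  have hsimple : ∀ i ∈ T, cs.simple i ∈ Subgroup.closure (cs.simple '' T) :=
    fun i hi ↦ Subgroup.subset_closure ⟨i, hi, rfl⟩
  induction hu using Subgroup.closure_induction_right with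
  | one => simp
  | mul_right x hx _ hy ih =>
    obtain ⟨i, hi, rfl⟩ := hy
    exact cs.length_mul_mul_simple_of_forall_length_le hm hx (hsimple i hi) ih
  | mul_inv_cancel x hx _ hy ih =>
    obtain ⟨i, hi, rfl⟩ := hy
    rw [inv_simple]
    exact cs.length_mul_mul_simple_of_forall_length_le hm hx (hsimple i hi) ih

@[reducible] noncomputable def wordMetric : MetricSpace W where
  dist x y := cs.length (x⁻¹ * y)
  dist_self x := by simp
  dist_comm x y := by rw [← length_inv, mul_inv_rev, inv_inv]
  dist_triangle x y z := by
    rw [show x⁻¹ * z = x⁻¹ * y * (y⁻¹ * z) by group]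
    exact_mod_cast cs.length_mul_le _ _
  eq_of_dist_eq_zero {x y} h := by
    rwa [Nat.cast_eq_zero, length_eq_zero_iff, inv_mul_eq_one] at h

theorem isGated_smul_closure (w : W) (T : Set B) :
    letI := cs.wordMetric
    Metric.IsGated (w • (Subgroup.closure (cs.simple '' T) : Set W)) := by
  set H := Subgroup.closure (cs.simple '' T)
  have hC : (w • (H : Set W)).Nonempty :=
    ⟨w, by simpa using Set.smul_mem_smul_set (a := w) H.one_mem⟩
  intro a
  set g := Function.argminOn (fun x ↦ cs.length (a⁻¹ * x)) _ hC
  have hg : g ∈ w • (H : Set W) := Function.argminOn_mem _ _ hC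
  refine ⟨g, hg, fun x hx ↦ ?_⟩
  rw [mem_leftCoset_iff] at hg hx
  have hmin : ∀ t ∈ H, cs.length (a⁻¹ * g) ≤ cs.length (a⁻¹ * g * t) := fun t ht ↦ by
    have hgt : g * t ∈ w • (H : Set W) := by
      rw [mem_leftCoset_iff, ← mul_assoc]
      exact mul_mem hg ht
    simpa [mul_assoc] using Function.argminOn_le (fun x ↦ cs.length (a⁻¹ * x)) _ hgt
  have hgx : g⁻¹ * x ∈ H := by simpa [mul_assoc] using mul_mem (inv_mem hg) hx
  show (cs.length (a⁻¹ * x) : ℝ) = cs.length (a⁻¹ * g) + cs.length (g⁻¹ * x)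
  rw [show a⁻¹ * x = a⁻¹ * g * (g⁻¹ * x) by group,
    cs.length_mul_eq_add_of_forall_length_le hmin hgx, Nat.cast_add]

end CoxeterSystem

theorem coxeter_parabolic_cosets_helly_general {B W : Type*} [Group W]
    (M : CoxeterMatrix B) (cs : CoxeterSystem M W)
    (n : ℕ) (w : Fin n → W) (T : Fin n → Set B)
    (hpair : ∀ i j : Fin n,
      ((w i • (Subgroup.closure (cs.simple '' T i) : Set W)) ∩
        (w j • (Subgroup.closure (cs.simple '' T j) : Set W))).Nonempty) :
    (⋂ i : Fin n, w i • (Subgroup.closure (cs.simple '' T i) : Set W)).Nonempty := by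
  let := cs.wordMetric
  exact Metric.IsGated.iInter_nonempty (fun i ↦ cs.isGated_smul_closure (w i) (T i)) hpair

/-- **Helly property for cosets of standard parabolic subgroups of a Coxeter group.**
Let `(W, {sᵢ}_{i ∈ B})` be a Coxeter system with `B` finite, and let
`R_k = w_k • W_{T_k}` (`k = 1, …, n`) be finitely many left cosets of standard parabolic
subgroups. If the `R_k` pairwise intersect, then their total intersection is nonempty. -/
theorem coxeter_parabolic_cosets_helly {B W : Type*} [Finite B] [Group W]
    (M : CoxeterMatrix B) (cs : CoxeterSystem M W)
    (n : ℕ) (w : Fin n → W) (T : Fin n → Set B)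
    (hpair : ∀ i j : Fin n,
      ((w i • (Subgroup.closure (cs.simple '' T i) : Set W)) ∩
        (w j • (Subgroup.closure (cs.simple '' T j) : Set W))).Nonempty) :
    (⋂ i : Fin n, w i • (Subgroup.closure (cs.simple '' T i) : Set W)).Nonempty :=
  coxeter_parabolic_cosets_helly_general M cs n w T hpair
end

section
/- Suppose that: (1) Y has no infinite cliques; (2) every finite subfamily of {X_i}_{i∈I} whose members pairwise intersect has nonempty total intersection; (3) for any three pairwise intersecting members X_{i₁}, X_{i₂}, X_{i₃} of the family there exists i₀ ∈ I such that (X_{i₁} ∩ X_{i₂}) ∪ (X_{i₂} ∩ X_{i₃}) ∪ (X_{i₃} ∩ X_{i₁}) ⊆ X_{i₀}. Then Y is finitely clique Helly: every finite family of pairwise intersecting maximal cliques of Y has a common vertex. -/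
/-- Every clique with at least two elements is contained in a single member of the family. -/
lemma clique_subset_aux {X : Type*} {I : Type*} (Xs : I → Set X) (Y : SimpleGraph X)
    (hY : ∀ x y : X, Y.Adj x y ↔ x ≠ y ∧ ∃ i : I, x ∈ Xs i ∧ y ∈ Xs i)
    (h3 : ∀ i₁ i₂ i₃ : I,
      (Xs i₁ ∩ Xs i₂).Nonempty → (Xs i₂ ∩ Xs i₃).Nonempty → (Xs i₃ ∩ Xs i₁).Nonempty →
      ∃ i₀ : I, (Xs i₁ ∩ Xs i₂) ∪ (Xs i₂ ∩ Xs i₃) ∪ (Xs i₃ ∩ Xs i₁) ⊆ Xs i₀) :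
    ∀ s : Finset X, 2 ≤ s.card → Y.IsClique (s : Set X) → ∃ i, (s : Set X) ⊆ Xs i := by
  classical
  intro s
  induction s using Finset.strongInductionOn with
  | _ s ih =>
    intro hcard hcl
    rcases Finset.one_lt_card.mp hcard with ⟨a, ha, b, hb, hab⟩
    by_cases h3le : 3 ≤ s.card
    · -- pick a third element c ∈ s \ {a, b}
      have hcard' : 1 ≤ ((s.erase a).erase b).card := by
        have h1 : (s.erase a).card = s.card - 1 := Finset.card_erase_of_mem ha
        have hb' : b ∈ s.erase a := Finset.mem_erase.mpr ⟨hab.symm, hb⟩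
        have h2 : ((s.erase a).erase b).card = (s.erase a).card - 1 :=
          Finset.card_erase_of_mem hb'
        omega
      rcases Finset.card_pos.mp hcard' with ⟨cc, hcc⟩
      rw [Finset.mem_erase, Finset.mem_erase] at hcc
      obtain ⟨hcb, hca, hcs⟩ := hcc
      -- apply IH to s.erase a and s.erase b
      have hea : s.erase a ⊂ s := Finset.erase_ssubset ha
      have heb : s.erase b ⊂ s := Finset.erase_ssubset hb
      have hclea : Y.IsClique ((s.erase a : Finset X) : Set X) :=
        hcl.subset (by exact_mod_cast Finset.coe_subset.mpr hea.subset)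
      have hcleb : Y.IsClique ((s.erase b : Finset X) : Set X) :=
        hcl.subset (by exact_mod_cast Finset.coe_subset.mpr heb.subset)
      have hcarda : 2 ≤ (s.erase a).card := by
        have := Finset.card_erase_of_mem ha; omega
      have hcardb : 2 ≤ (s.erase b).card := by
        have := Finset.card_erase_of_mem hb; omega
      obtain ⟨i₁, hi₁⟩ := ih (s.erase a) hea hcarda hclea
      obtain ⟨i₂, hi₂⟩ := ih (s.erase b) heb hcardb hcleb
      -- a and b are adjacent, giving i₃
      have hadj : Y.Adj a b := hcl ha hb hab
      rw [hY] at hadj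
      obtain ⟨-, i₃, hai₃, hbi₃⟩ := hadj
      -- pairwise intersections nonempty
      have hc12 : (Xs i₁ ∩ Xs i₂).Nonempty := by
        refine ⟨cc, hi₁ ?_, hi₂ ?_⟩
        · exact_mod_cast Finset.mem_erase.mpr ⟨hca, hcs⟩
        · exact_mod_cast Finset.mem_erase.mpr ⟨hcb, hcs⟩
      have hc23 : (Xs i₂ ∩ Xs i₃).Nonempty := by
        refine ⟨a, hi₂ ?_, hai₃⟩
        exact_mod_cast Finset.mem_erase.mpr ⟨hab, ha⟩
      have hc31 : (Xs i₃ ∩ Xs i₁).Nonempty := by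
        refine ⟨b, hbi₃, hi₁ ?_⟩
        exact_mod_cast Finset.mem_erase.mpr ⟨hab.symm, hb⟩
      obtain ⟨i₀, hi₀⟩ := h3 i₁ i₂ i₃ hc12 hc23 hc31
      refine ⟨i₀, fun x hx => ?_⟩
      have hxs : x ∈ s := by exact_mod_cast hx
      by_cases hxa : x = a
      · subst hxa
        apply hi₀
        exact Or.inl (Or.inr ⟨hi₂ (by exact_mod_cast Finset.mem_erase.mpr ⟨hab, ha⟩), hai₃⟩)
      · by_cases hxb : x = b
        · subst hxb
          apply hi₀
          exact Or.inr ⟨hbi₃, hi₁ (by exact_mod_cast Finset.mem_erase.mpr ⟨hab.symm, hb⟩)⟩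
        · apply hi₀
          refine Or.inl (Or.inl ⟨hi₁ ?_, hi₂ ?_⟩)
          · exact_mod_cast Finset.mem_erase.mpr ⟨hxa, hxs⟩
          · exact_mod_cast Finset.mem_erase.mpr ⟨hxb, hxs⟩
    · -- s = {a, b}
      have hs : s = {a, b} := by
        apply Finset.eq_of_subset_of_card_le
        · intro x hx
          by_contra hxab
          rw [Finset.mem_insert, Finset.mem_singleton] at hxab
          push_neg at hxab
          have : 3 ≤ s.card := by
            have : ({x, a, b} : Finset X) ⊆ s := by
              intro y hy
              simp only [Finset.mem_insert, Finset.mem_singleton] at hy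
              rcases hy with rfl | rfl | rfl <;> assumption
            have hc3 : ({x, a, b} : Finset X).card = 3 :=
              Finset.card_eq_three.mpr ⟨x, a, b, hxab.1, hxab.2, hab, rfl⟩
            calc 3 = ({x, a, b} : Finset X).card := hc3.symm
              _ ≤ s.card := Finset.card_le_card this
          omega
        · rw [Finset.card_insert_of_notMem (by simp [hab]), Finset.card_singleton]
          omega
      have hadj : Y.Adj a b := hcl ha hb hab
      rw [hY] at hadj
      obtain ⟨-, i, hai, hbi⟩ := hadj
      refine ⟨i, ?_⟩
      rw [hs]
      intro x hx
      simp only [Finset.coe_insert, Finset.coe_singleton, Set.mem_insert_iff,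
        Set.mem_singleton_iff] at hx
      rcases hx with rfl | rfl <;> assumption

/-- Let `Y` be the graph on the set `X` in which distinct vertices are adjacent iff they
lie in a common member of the family `{Xᵢ}`. Suppose (1) `Y` has no infinite cliques;
(2) every finite nonempty pairwise intersecting subfamily of `{Xᵢ}` has nonempty total
intersection; (3) for any three pairwise intersecting members of the family, the union of
their pairwise intersections is contained in a single member. Then `Y` is finitely clique
Helly: every finite nonempty family of pairwise intersecting maximal cliques of `Y` has a
common vertex. -/
theorem finitely_clique_helly {X : Type*} {I : Type*} (Xs : I → Set X)
    (Y : SimpleGraph X)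
    (hY : ∀ x y : X, Y.Adj x y ↔ x ≠ y ∧ ∃ i : I, x ∈ Xs i ∧ y ∈ Xs i)
    (h1 : ∀ s : Set X, Y.IsClique s → s.Finite)
    (h2 : ∀ J : Finset I, J.Nonempty →
      (∀ i ∈ J, ∀ j ∈ J, (Xs i ∩ Xs j).Nonempty) → (⋂ i ∈ J, Xs i).Nonempty)
    (h3 : ∀ i₁ i₂ i₃ : I,
      (Xs i₁ ∩ Xs i₂).Nonempty → (Xs i₂ ∩ Xs i₃).Nonempty → (Xs i₃ ∩ Xs i₁).Nonempty →
      ∃ i₀ : I, (Xs i₁ ∩ Xs i₂) ∪ (Xs i₂ ∩ Xs i₃) ∪ (Xs i₃ ∩ Xs i₁) ⊆ Xs i₀) :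
    ∀ (n : ℕ), 0 < n → ∀ c : Fin n → Set X,
      (∀ k, Y.IsClique (c k) ∧ ∀ t : Set X, Y.IsClique t → c k ⊆ t → c k = t) →
      (∀ k l, (c k ∩ c l).Nonempty) →
      (⋂ k, c k).Nonempty := by
  classical
  intro n hn c hmax hpw
  have hne : ∀ k, (c k).Nonempty := fun k => ((hpw k k).mono (Set.inter_subset_left))
  by_cases hsing : ∃ k x, c k = {x}
  · obtain ⟨k, x, hk⟩ := hsing
    refine ⟨x, Set.mem_iInter.mpr fun l => ?_⟩
    obtain ⟨y, hyk, hyl⟩ := hpw k l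
    rw [hk, Set.mem_singleton_iff] at hyk
    rwa [hyk] at hyl
  · push_neg at hsing
    -- every c k has at least two elements
    have htwo : ∀ k, ∃ a ∈ c k, ∃ b ∈ c k, a ≠ b := by
      intro k
      obtain ⟨a, ha⟩ := hne k
      by_contra h
      push_neg at h
      apply hsing k a
      apply Set.eq_singleton_iff_unique_mem.mpr
      exact ⟨ha, fun y hy => (h a ha y hy).symm ▸ rfl⟩
    -- each c k is contained in some Xs (j k)
    have hsub : ∀ k, ∃ i, c k ⊆ Xs i := by
      intro k
      have hfin := h1 (c k) (hmax k).1
      obtain ⟨a, ha, b, hb, hab⟩ := htwo k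
      have hcard : 2 ≤ hfin.toFinset.card :=
        Finset.one_lt_card.mpr ⟨a, hfin.mem_toFinset.mpr ha, b, hfin.mem_toFinset.mpr hb, hab⟩
      have hcl : Y.IsClique ((hfin.toFinset : Finset X) : Set X) := by
        rw [Set.Finite.coe_toFinset]; exact (hmax k).1
      obtain ⟨i, hi⟩ := clique_subset_aux Xs Y hY h3 hfin.toFinset hcard hcl
      exact ⟨i, by rwa [Set.Finite.coe_toFinset] at hi⟩
    choose j hj using hsub
    set J : Finset I := Finset.image j Finset.univ with hJ
    have hJne : J.Nonempty := by
      have : (Finset.univ : Finset (Fin n)).Nonempty := by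
        rw [Finset.univ_nonempty_iff]
        exact ⟨⟨0, hn⟩⟩
      exact this.image j
    have hJpw : ∀ i ∈ J, ∀ i' ∈ J, (Xs i ∩ Xs i').Nonempty := by
      intro i hi i' hi'
      rw [hJ, Finset.mem_image] at hi hi'
      obtain ⟨k, -, rfl⟩ := hi
      obtain ⟨l, -, rfl⟩ := hi'
      exact (hpw k l).mono (Set.inter_subset_inter (hj k) (hj l))
    obtain ⟨x, hx⟩ := h2 J hJne hJpw
    rw [Set.mem_iInter₂] at hx
    have hxk : ∀ k, x ∈ Xs (j k) := fun k =>
      hx (j k) (Finset.mem_image.mpr ⟨k, Finset.mem_univ k, rfl⟩)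
    refine ⟨x, Set.mem_iInter.mpr fun k => ?_⟩
    have hcl' : Y.IsClique (insert x (c k)) := by
      apply (hmax k).1.insert
      intro b hb hxb
      rw [hY]
      exact ⟨hxb, j k, hxk k, hj k hb⟩
    have := (hmax k).2 (insert x (c k)) hcl' (Set.subset_insert x (c k))
    rw [this]
    exact Set.mem_insert x (c k)
end

section
/- Let a₁, …, aₙ ∈ G, b₁, …, bₙ ∈ M, and c ∈ G satisfy a_i · b_i = c for all 1 ≤ i ≤ n. Then (a₁ ∨_p ⋯ ∨_p aₙ) · (b₁ ∧ₛ ⋯ ∧ₛ bₙ) = c and (a₁ ∧_p ⋯ ∧_p aₙ) · (b₁ ∨ₛ ⋯ ∨ₛ bₙ) = c. -/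
variable {G : Type*} [Group G]

/-!
The map `x ↦ x⁻¹ * c` is a bijection of `G` that reverses the orders, `x ≼ y ↔ y⁻¹ c ≼ₛ x⁻¹ c`,
and it sends each `aᵢ` to `bᵢ`. Hence it carries the prefix join of the `aᵢ` to a suffix meet
of the `bᵢ` and the prefix meet to a suffix join; since `M ∩ M⁻¹ = {1}` makes `≼ₛ` antisymmetric,
these are the given `b₁ ∧ₛ ⋯ ∧ₛ bₙ` and `b₁ ∨ₛ ⋯ ∨ₛ bₙ`.
-/

section OrderReversing

variable {α : Type*} {le₁ le₂ : α → α → Prop} {f : α → α} {s : Set α} {x : α}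

theorem IsLUBOf.isGLBOf_image (hf : ∀ x y, le₁ x y ↔ le₂ (f y) (f x))
    (hsurj : Function.Surjective f) (h : IsLUBOf le₁ s x) : IsGLBOf le₂ (f '' s) (f x) := by
  refine ⟨?_, fun z hz => ?_⟩
  · rintro _ ⟨y, hy, rfl⟩
    exact (hf y x).1 (h.1 y hy)
  · obtain ⟨z, rfl⟩ := hsurj z
    have hub : IsUBOf le₁ s z := fun y hy => (hf y z).2 (hz (f y) ⟨y, hy, rfl⟩)
    exact (hf x z).1 (h.2 z hub)

theorem IsGLBOf.isLUBOf_image (hf : ∀ x y, le₁ x y ↔ le₂ (f y) (f x))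
    (hsurj : Function.Surjective f) (h : IsGLBOf le₁ s x) : IsLUBOf le₂ (f '' s) (f x) := by
  refine ⟨?_, fun z hz => ?_⟩
  · rintro _ ⟨y, hy, rfl⟩
    exact (hf x y).1 (h.1 y hy)
  · obtain ⟨z, rfl⟩ := hsurj z
    have hlb : ∀ y ∈ s, le₁ z y := fun y hy => (hf z y).2 (hz (f y) ⟨y, hy, rfl⟩)
    exact (hf z x).1 (h.2 z hlb)

end OrderReversing

section Uniqueness

variable {α : Type*} {le : α → α → Prop} {s : Set α} {x y : α}

theorem IsLUBOf.unique (hanti : ∀ x y, le x y → le y x → x = y)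
    (hx : IsLUBOf le s x) (hy : IsLUBOf le s y) : x = y :=
  hanti x y (hx.2 y hy.1) (hy.2 x hx.1)

theorem IsGLBOf.unique (hanti : ∀ x y, le x y → le y x → x = y)
    (hx : IsGLBOf le s x) (hy : IsGLBOf le s y) : x = y :=
  hanti x y (hy.2 x hx.1) (hx.2 y hy.1)

end Uniqueness

theorem suffixRel_antisymm {M : Submonoid G} (hM : ∀ x : G, x ∈ M → x⁻¹ ∈ M → x = 1)
    (x y : G) (hxy : SuffixRel M x y) (hyx : SuffixRel M y x) : x = y := by
  have hinv : (y * x⁻¹)⁻¹ ∈ M := by simpa only [SuffixRel, mul_inv_rev, inv_inv] using hyx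
  exact (mul_inv_eq_one.1 (hM _ hxy hinv)).symm

theorem prefixRel_iff_suffixRel_inv_mul (M : Submonoid G) (c x y : G) :
    PrefixRel M x y ↔ SuffixRel M (y⁻¹ * c) (x⁻¹ * c) := by
  simp only [PrefixRel, SuffixRel, mul_inv_rev, inv_inv, mul_assoc, mul_inv_cancel_left]

theorem inv_mul_surjective (c : G) : Function.Surjective fun x : G => x⁻¹ * c :=
  fun u => ⟨c * u⁻¹, by group⟩

theorem join_mul_meet_eq_general (M : Submonoid G)
    (hM : ∀ x : G, x ∈ M → x⁻¹ ∈ M → x = 1)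
    (n : ℕ) (a b : Fin n → G) (c : G)
    (habc : ∀ i, a i * b i = c) :
    (∀ ja mb : G, IsLUBOf (PrefixRel M) (Set.range a) ja →
      IsGLBOf (SuffixRel M) (Set.range b) mb → ja * mb = c) ∧
    (∀ ma jb : G, IsGLBOf (PrefixRel M) (Set.range a) ma →
      IsLUBOf (SuffixRel M) (Set.range b) jb → ma * jb = c) := by
  have hrange : (fun x => x⁻¹ * c) '' Set.range a = Set.range b := by
    rw [← Set.range_comp]
    exact congrArg Set.range (funext fun i => (eq_inv_mul_of_mul_eq (habc i)).symm)
  have hf := prefixRel_iff_suffixRel_inv_mul M c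
  constructor
  · intro ja mb hja hmb
    have hmeet := hja.isGLBOf_image hf (inv_mul_surjective c)
    rw [hrange] at hmeet
    rw [hmb.unique (suffixRel_antisymm hM) hmeet, mul_inv_cancel_left]
  · intro ma jb hma hjb
    have hjoin := hma.isLUBOf_image hf (inv_mul_surjective c)
    rw [hrange] at hjoin
    rw [hjb.unique (suffixRel_antisymm hM) hjoin, mul_inv_cancel_left]

/-- If `aᵢ · bᵢ = c` for all `i` (with each `bᵢ ∈ M`), then
`(a₁ ∨_p ⋯ ∨_p aₙ) · (b₁ ∧ₛ ⋯ ∧ₛ bₙ) = c` and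
`(a₁ ∧_p ⋯ ∧_p aₙ) · (b₁ ∨ₛ ⋯ ∨ₛ bₙ) = c` (joins and meets stated via the
least-upper-bound and greatest-lower-bound predicates). -/
theorem join_mul_meet_eq (M : Submonoid G)
    (hM : ∀ x : G, x ∈ M → x⁻¹ ∈ M → x = 1)
    (hlp : IsLatticeRel (PrefixRel M)) (hls : IsLatticeRel (SuffixRel M))
    (n : ℕ) (hn : 0 < n) (a b : Fin n → G) (c : G)
    (hbM : ∀ i, b i ∈ M) (habc : ∀ i, a i * b i = c) :
    (∀ ja mb : G, IsLUBOf (PrefixRel M) (Set.range a) ja →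
      IsGLBOf (SuffixRel M) (Set.range b) mb → ja * mb = c) ∧
    (∀ ma jb : G, IsGLBOf (PrefixRel M) (Set.range a) ma →
      IsLUBOf (SuffixRel M) (Set.range b) jb → ma * jb = c) :=
  join_mul_meet_eq_general M hM n a b c habc
end

section
/- Let S = {a ∈ M : a ≼ Δ} be the set of simple elements, and for a ∈ S set a* = a⁻¹Δ. Then: (1) the map a ↦ a* is a bijection from S to S; (2) for a, b ∈ S, a ≼ₛ b if and only if b* ≼ a*; (3) for a, b ∈ S, (a ∧ₛ b)* = a* ∨_p b* and (a ∨ₛ b)* = a* ∧_p b*. -/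
variable {G : Type*} [Group G]

/-- The set of simple elements `S = {a ∈ M : a ≼ Δ}`. -/
def Simples (M : Submonoid G) (Δ : G) : Set G := {a : G | a ∈ M ∧ PrefixRel M a Δ}

/-- For the map `a ↦ a* = a⁻¹Δ` on the set `S` of simple elements:
(1) it is a bijection from `S` to `S`;
(2) for `a, b ∈ S`, `a ≼ₛ b` iff `b* ≼ a*`;
(3) for `a, b ∈ S`, `(a ∧ₛ b)* = a* ∨_p b*` and `(a ∨ₛ b)* = a* ∧_p b*`
(joins and meets stated via the least-upper-bound and greatest-lower-bound predicates). -/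
theorem simple_star_bijection (M : Submonoid G)
    (hM : ∀ x : G, x ∈ M → x⁻¹ ∈ M → x = 1)
    (hlp : IsLatticeRel (PrefixRel M)) (hls : IsLatticeRel (SuffixRel M))
    (Δ : G) (hΔ : Δ ∈ M) (hconj : ∀ x : G, x ∈ M ↔ Δ * x * Δ⁻¹ ∈ M) :
    Set.BijOn (fun a : G => a⁻¹ * Δ) (Simples M Δ) (Simples M Δ) ∧
    (∀ a ∈ Simples M Δ, ∀ b ∈ Simples M Δ,
      (SuffixRel M a b ↔ PrefixRel M (b⁻¹ * Δ) (a⁻¹ * Δ))) ∧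
    (∀ a ∈ Simples M Δ, ∀ b ∈ Simples M Δ,
      (∀ m : G, IsGLBOf (SuffixRel M) {a, b} m →
        IsLUBOf (PrefixRel M) {a⁻¹ * Δ, b⁻¹ * Δ} (m⁻¹ * Δ)) ∧
      (∀ j : G, IsLUBOf (SuffixRel M) {a, b} j →
        IsGLBOf (PrefixRel M) {a⁻¹ * Δ, b⁻¹ * Δ} (j⁻¹ * Δ))) := by
  have key : ∀ x y : G, SuffixRel M x y ↔ PrefixRel M (y⁻¹ * Δ) (x⁻¹ * Δ) := by
    intro x y
    have h2 : Δ * ((y⁻¹ * Δ)⁻¹ * (x⁻¹ * Δ)) * Δ⁻¹ = y * x⁻¹ := by group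
    rw [SuffixRel, PrefixRel, ← h2]
    exact (hconj _).symm
  have star2 : ∀ z : G, (Δ * z⁻¹)⁻¹ * Δ = z := by intro z; group
  refine ⟨⟨?_, ?_, ?_⟩, ?_, ?_⟩
  · rintro a ⟨ha, ha'⟩
    refine ⟨ha', ?_⟩
    unfold PrefixRel
    exact (hconj ((a⁻¹ * Δ)⁻¹ * Δ)).mpr (by convert ha using 1; group)
  · intro a _ b _ h
    dsimp only at h
    exact inv_injective (mul_right_cancel h)
  · rintro b ⟨hb, hb'⟩
    refine ⟨Δ * b⁻¹, ⟨?_, ?_⟩, star2 b⟩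
    · have := (hconj (b⁻¹ * Δ)).mp hb'
      convert this using 1; group
    · unfold PrefixRel
      convert hb using 1; group
  · intro a _ b _; exact key a b
  · intro a _ b _
    constructor
    · rintro m ⟨hub, hlst⟩
      constructor
      · intro y hy
        rcases hy with h | h <;> rw [h]
        · exact (key m a).mp (hub a (by simp))
        · exact (key m b).mp (hub b (by simp))
      · intro z hz
        have hw : SuffixRel M (Δ * z⁻¹) m := by
          apply hlst
          intro y hy
          rcases hy with h | h <;> rw [h]
          · exact (key _ a).mpr (by rw [star2]; exact hz _ (by simp))
          · exact (key _ b).mpr (by rw [star2]; exact hz _ (by simp))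
        have := (key (Δ * z⁻¹) m).mp hw
        rwa [star2] at this
    · rintro j ⟨hub, hlst⟩
      constructor
      · intro y hy
        rcases hy with h | h <;> rw [h]
        · exact (key a j).mp (hub a (by simp))
        · exact (key b j).mp (hub b (by simp))
      · intro z hz
        have hw : SuffixRel M j (Δ * z⁻¹) := by
          apply hlst
          intro y hy
          rcases hy with h | h <;> rw [h]
          · exact (key a _).mpr (by rw [star2]; exact hz _ (by simp))
          · exact (key b _).mpr (by rw [star2]; exact hz _ (by simp))
        have := (key j (Δ * z⁻¹)).mp hw
        rwa [star2] at this
end
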